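/- Let μ_1, …, μ_J be probability measures on ℝ^d with finite second moments, let λ_1, …, λ_J be positive weights summing to 1, and let γ be any probability measure on (ℝ^d)^J whose j-th marginal is μ_j for each j. Then, writing T(x_1, …, x_J) = Σ_{i=1}^J λ_i x_i, one has ∫ Σ_{j=1}^J λ_j |T(x) − x_j|² dγ(x_1, …, x_J) = (1/2) Σ_{i=1}^J Σ_{j=1}^J λ_i λ_j ∫ |x_i − x_j|² dγ ≥ Σ_{1 ≤ i < j ≤ J} λ_i λ_j W2²(μ_i, μ_j). -/

import Mathlib

open MeasureTheory ENNReal NNReal Filter Topology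

noncomputable section

/-- A coupling of `μ` and `ν`: a measure on the product whose marginals are `μ` and `ν`. -/
def IsCoupling {E : Type*} [MeasurableSpace E] (π : Measure (E × E)) (μ ν : Measure E) : Prop :=
  π.map Prod.fst = μ ∧ π.map Prod.snd = ν

/-- Squared 2-Wasserstein distance: infimum over couplings of `∫ |x - y|² dπ`. -/
def W2sq {E : Type*} [NormedAddCommGroup E] [MeasurableSpace E] (μ ν : Measure E) : ℝ≥0∞ :=
  ⨅ (π : Measure (E × E)) (_ : IsCoupling π μ ν), ∫⁻ p, (‖p.1 - p.2‖₊ : ℝ≥0∞) ^ 2 ∂π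

/-- The 2-Wasserstein distance. -/
def W2 {E : Type*} [NormedAddCommGroup E] [MeasurableSpace E] (μ ν : Measure E) : ℝ≥0∞ :=
  W2sq μ ν ^ (1/2 : ℝ)

/-- A measure has a finite second moment. -/
def FiniteSecondMoment {E : Type*} [NormedAddCommGroup E] [MeasurableSpace E]
    (μ : Measure E) : Prop :=
  ∫⁻ x, (‖x‖₊ : ℝ≥0∞) ^ 2 ∂μ < ∞

/-!
With `T = ∑ i, λ_i x_i` and `S = ∑ j, λ_j |x_j|²`, expanding squares gives, for every `y`,
`∑ j, λ_j |y - x_j|² = |y|² - 2⟪y, T⟫ + S`. Taking `y = T` and averaging over `y = x_i` shows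
that both sides of the identity equal `S - |T|²` pointwise, and integrating against `γ` gives the
identity. For the bound, the image of `γ` under `x ↦ (x_i, x_j)` couples `μ_i` and `μ_j`, so
`W₂²(μ_i, μ_j) ≤ ∫ |x_i - x_j|² dγ`, and the symmetric double sum with vanishing diagonal is twice
the sum over `i < j`.
-/

open Finset

section WeightedMean

variable {ι E : Type*} [Fintype ι] [NormedAddCommGroup E] [InnerProductSpace ℝ E]

theorem sum_mul_norm_sub_sq_of_sum_eq_one {w : ι → ℝ} (hw : ∑ j, w j = 1) (x : ι → E) (y : E) :
    ∑ j, w j * ‖y - x j‖ ^ 2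
      = ‖y‖ ^ 2 - 2 * inner ℝ y (∑ j, w j • x j) + ∑ j, w j * ‖x j‖ ^ 2 := by
  simp only [norm_sub_sq_real, mul_add, mul_sub, sum_add_distrib, sum_sub_distrib,
    ← sum_mul, hw, inner_sum, inner_smul_right]
  simp only [mul_sum]
  ring_nf

theorem sum_mul_norm_weightedSum_sub_sq {w : ι → ℝ} (hw : ∑ j, w j = 1) (x : ι → E) :
    ∑ j, w j * ‖(∑ i, w i • x i) - x j‖ ^ 2
      = 1 / 2 * ∑ i, ∑ j, w i * w j * ‖x i - x j‖ ^ 2 := by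
  set T := ∑ i, w i • x i
  set S := ∑ j, w j * ‖x j‖ ^ 2
  have hT : ∑ i, w i * inner ℝ (x i) T = ‖T‖ ^ 2 := by
    simp only [T, ← real_inner_self_eq_norm_sq, sum_inner, real_inner_smul_left]
  have hpairs : ∑ i, ∑ j, w i * w j * ‖x i - x j‖ ^ 2 = 2 * (S - ‖T‖ ^ 2) := by
    simp only [mul_assoc, ← mul_sum, sum_mul_norm_sub_sq_of_sum_eq_one hw, mul_add, mul_sub,
      sum_add_distrib, sum_sub_distrib, ← sum_mul, hw]
    simp only [mul_left_comm (w _) (2 : ℝ), ← mul_sum]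
    rw [hT]
    ring
  rw [sum_mul_norm_sub_sq_of_sum_eq_one hw, hpairs, real_inner_self_eq_norm_sq]
  ring

theorem sum_coe_mul_nnnorm_weightedSum_sub_sq {w : ι → ℝ≥0} (hw : ∑ j, w j = 1) (x : ι → E) :
    ∑ j, (w j : ℝ≥0∞) * (‖(∑ i, (w i : ℝ) • x i) - x j‖₊ : ℝ≥0∞) ^ 2
      = 1 / 2 * ∑ i, ∑ j, (w i : ℝ≥0∞) * w j * (‖x i - x j‖₊ : ℝ≥0∞) ^ 2 := by
  rw [← ENNReal.coe_one, ← ENNReal.coe_two, ← ENNReal.coe_div two_ne_zero]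
  simp only [← ENNReal.coe_pow, ← ENNReal.coe_mul, ← ENNReal.ofNNReal_finsetSum,
    ENNReal.coe_inj, ← NNReal.coe_inj]
  push_cast
  exact sum_mul_norm_weightedSum_sub_sq (by exact_mod_cast congrArg NNReal.toReal hw) x

theorem lintegral_sum_mul_nnnorm_weightedSum_sub_sq [MeasurableSpace E] [BorelSpace E]
    [SecondCountableTopology E] {w : ι → ℝ≥0} (hw : ∑ j, w j = 1) (γ : Measure (ι → E)) :
    ∫⁻ x, ∑ j, (w j : ℝ≥0∞) * (‖(∑ i, (w i : ℝ) • x i) - x j‖₊ : ℝ≥0∞) ^ 2 ∂γ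
      = 1 / 2 * ∑ i, ∑ j, (w i : ℝ≥0∞) * w j * ∫⁻ x, (‖x i - x j‖₊ : ℝ≥0∞) ^ 2 ∂γ := by
  have hmeas : ∀ i j, Measurable fun x : ι → E ↦ (‖x i - x j‖₊ : ℝ≥0∞) ^ 2 :=
    fun i j ↦ by fun_prop
  simp_rw [sum_coe_mul_nnnorm_weightedSum_sub_sq hw]
  rw [lintegral_const_mul' _ _ (by norm_num), lintegral_finsetSum _ fun i _ ↦ by fun_prop]
  simp_rw [lintegral_finsetSum _ fun j _ ↦ (hmeas _ j).const_mul _,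
    lintegral_const_mul _ (hmeas _ _)]

end WeightedMean

theorem sum_sum_eq_two_nsmul_sum_sum_Ioi {ι M : Type*} [Fintype ι] [LinearOrder ι]
    [LocallyFiniteOrderTop ι] [LocallyFiniteOrderBot ι] [AddCommMonoid M] {F : ι → ι → M}
    (hdiag : ∀ i, F i i = 0) (hsymm : ∀ i j, F i j = F j i) :
    ∑ i, ∑ j, F i j = 2 • ∑ i, ∑ j ∈ Ioi i, F i j := by
  classical
  calc ∑ i, ∑ j, F i j = ∑ i, ∑ j ∈ {i}ᶜ, F j i := by
        rw [sum_comm]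
        exact sum_congr rfl fun i _ ↦ by rw [Fintype.sum_eq_add_sum_compl i, hdiag, zero_add]
    _ = ∑ i, ∑ j ∈ Ioi i, (F j i + F i j) := (sum_sum_Ioi_add_eq_sum_sum_off_diag F).symm
    _ = 2 • ∑ i, ∑ j ∈ Ioi i, F i j := by
        simp only [smul_sum, two_nsmul, fun i j ↦ hsymm j i]

section Coupling

variable {Ω E : Type*} [MeasurableSpace Ω] [MeasurableSpace E]

theorem isCoupling_map_prodMk (γ : Measure Ω) {f g : Ω → E} (hf : Measurable f)
    (hg : Measurable g) : IsCoupling (γ.map fun x ↦ (f x, g x)) (γ.map f) (γ.map g) :=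
  ⟨Measure.map_map measurable_fst (hf.prodMk hg), Measure.map_map measurable_snd (hf.prodMk hg)⟩

variable [NormedAddCommGroup E]

theorem W2sq_le_lintegral_of_isCoupling {π : Measure (E × E)} {μ ν : Measure E}
    (hπ : IsCoupling π μ ν) : W2sq μ ν ≤ ∫⁻ p, (‖p.1 - p.2‖₊ : ℝ≥0∞) ^ 2 ∂π :=
  iInf₂_le π hπ

theorem W2sq_map_le_lintegral (γ : Measure Ω) {f g : Ω → E} (hf : Measurable f)
    (hg : Measurable g) : W2sq (γ.map f) (γ.map g) ≤ ∫⁻ x, (‖f x - g x‖₊ : ℝ≥0∞) ^ 2 ∂γ :=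
  (W2sq_le_lintegral_of_isCoupling (isCoupling_map_prodMk γ hf hg)).trans
    (lintegral_map_le _ _)

end Coupling

theorem multimarginal_cost_identity_and_lower_bound_general {d J : ℕ}
    (μs : Fin J → Measure (EuclideanSpace ℝ (Fin d)))
    (w : Fin J → ℝ≥0) (hw_sum : ∑ j, w j = 1)
    (γ : Measure (Fin J → EuclideanSpace ℝ (Fin d)))
    (hmarg : ∀ j, γ.map (fun x => x j) = μs j) :
    (∫⁻ x, ∑ j, (w j : ℝ≥0∞) *
        (‖(∑ i, (w i : ℝ) • x i) - x j‖₊ : ℝ≥0∞) ^ 2 ∂γ =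
      (1 / 2 : ℝ≥0∞) * ∑ i, ∑ j,
        (w i : ℝ≥0∞) * (w j : ℝ≥0∞) * ∫⁻ x, (‖x i - x j‖₊ : ℝ≥0∞) ^ 2 ∂γ) ∧
    (∑ i, ∑ j ∈ Finset.Ioi i, (w i : ℝ≥0∞) * (w j : ℝ≥0∞) * W2sq (μs i) (μs j) ≤
      (1 / 2 : ℝ≥0∞) * ∑ i, ∑ j,
        (w i : ℝ≥0∞) * (w j : ℝ≥0∞) * ∫⁻ x, (‖x i - x j‖₊ : ℝ≥0∞) ^ 2 ∂γ) := by
  refine ⟨lintegral_sum_mul_nnnorm_weightedSum_sub_sq hw_sum γ, ?_⟩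
  set F : Fin J → Fin J → ℝ≥0∞ :=
    fun i j ↦ w i * w j * ∫⁻ x, (‖x i - x j‖₊ : ℝ≥0∞) ^ 2 ∂γ
  have hW2sq_le : ∀ i j, W2sq (μs i) (μs j) ≤ ∫⁻ x, (‖x i - x j‖₊ : ℝ≥0∞) ^ 2 ∂γ := fun i j ↦
    hmarg i ▸ hmarg j ▸ W2sq_map_le_lintegral γ (measurable_pi_apply i) (measurable_pi_apply j)
  have hF : ∑ i, ∑ j, F i j = 2 * ∑ i, ∑ j ∈ Ioi i, F i j := by
    rw [sum_sum_eq_two_nsmul_sum_sum_Ioi (fun i ↦ by simp [F]) fun i j ↦ ?_, nsmul_eq_mul,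
      Nat.cast_ofNat]
    simp only [F, mul_comm (w i : ℝ≥0∞)]
    exact congrArg _ (lintegral_congr fun x ↦ by rw [← nnnorm_neg, neg_sub])
  calc ∑ i, ∑ j ∈ Ioi i, (w i : ℝ≥0∞) * w j * W2sq (μs i) (μs j)
      ≤ ∑ i, ∑ j ∈ Ioi i, F i j := 
        sum_le_sum fun i _ ↦ sum_le_sum fun j _ ↦ mul_le_mul_right (hW2sq_le i j) _
    _ = 1 / 2 * ∑ i, ∑ j, F i j := by
        rw [hF, ← mul_assoc, one_div, ENNReal.inv_mul_cancel two_ne_zero ofNat_ne_top, one_mul]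

/-- For any multi-coupling `γ` of `μ_1, …, μ_J` and `T(x) = ∑ i, λ_i x_i`,
`∫ ∑_j λ_j |T(x) - x_j|² dγ = (1/2) ∑_{i,j} λ_i λ_j ∫ |x_i - x_j|² dγ
  ≥ ∑_{i<j} λ_i λ_j W₂²(μ_i, μ_j)`. -/
theorem multimarginal_cost_identity_and_lower_bound {d J : ℕ}
    (μs : Fin J → Measure (EuclideanSpace ℝ (Fin d)))
    (hμ_prob : ∀ j, IsProbabilityMeasure (μs j))
    (hμ_mom : ∀ j, FiniteSecondMoment (μs j))
    (w : Fin J → ℝ≥0) (hw_pos : ∀ j, 0 < w j) (hw_sum : ∑ j, w j = 1)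
    (γ : Measure (Fin J → EuclideanSpace ℝ (Fin d)))
    (hγ_prob : IsProbabilityMeasure γ)
    (hmarg : ∀ j, γ.map (fun x => x j) = μs j) :
    (∫⁻ x, ∑ j, (w j : ℝ≥0∞) *
        (‖(∑ i, (w i : ℝ) • x i) - x j‖₊ : ℝ≥0∞) ^ 2 ∂γ =
      (1 / 2 : ℝ≥0∞) * ∑ i, ∑ j,
        (w i : ℝ≥0∞) * (w j : ℝ≥0∞) * ∫⁻ x, (‖x i - x j‖₊ : ℝ≥0∞) ^ 2 ∂γ) ∧
    (∑ i, ∑ j ∈ Finset.Ioi i, (w i : ℝ≥0∞) * (w j : ℝ≥0∞) * W2sq (μs i) (μs j) ≤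
      (1 / 2 : ℝ≥0∞) * ∑ i, ∑ j,
        (w i : ℝ≥0∞) * (w j : ℝ≥0∞) * ∫⁻ x, (‖x i - x j‖₊ : ℝ≥0∞) ^ 2 ∂γ) :=
  multimarginal_cost_identity_and_lower_bound_general μs w hw_sum γ hmarg
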